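/- Let H be a K_5-minor-free graph containing D_n (for some n ≥ 3) as an induced subgraph. Then H satisfies the first-order sentence φ asserting: there exist x_1, x_2, y, z with E(x_1,y), E(y,z), E(z,x_2), such that for all a, b with E(x_1,a), E(a,b), E(b,x_2) there exist c, d with E(x_1,c), E(a,c), E(b,c), E(b,d), E(c,d), E(d,x_2). -/

import Mathlib

/-- The ladder-with-hubs graph `G n`: vertices `v₁ = Sum.inl false`, `v₂ = Sum.inl true`,
`a i = Sum.inr (false, i)` and `b i = Sum.inr (true, i)` (`0`-based indices, so `a_1` of
the paper is `a 0`, etc.), with edges `(v₁, a i)`, `(v₂, b i)`, `(a i, b i)` for all `i`,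
and `(a i, a (i+1))`, `(b i, b (i+1))`, `(a (i+1), b i)`. -/
def Gr (n : ℕ) : SimpleGraph (Bool ⊕ Bool × Fin n) :=
  SimpleGraph.fromRel (fun u v =>
    match u, v with
    | Sum.inl c, Sum.inr (d, _) => c = d
    | Sum.inr (false, i), Sum.inr (true, j) => (i : ℕ) = (j : ℕ) ∨ (i : ℕ) = (j : ℕ) + 1
    | Sum.inr (false, i), Sum.inr (false, j) => (i : ℕ) + 1 = (j : ℕ)
    | Sum.inr (true, i), Sum.inr (true, j) => (i : ℕ) + 1 = (j : ℕ)
    | _, _ => False)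

/-- The graph `D n`: the graph `G n` together with the wrap-around edges
`(a_1, a_n)`, `(b_1, b_n)` and `(a_1, b_n)` (in `0`-based indices: `(a 0, a (n-1))`,
`(b 0, b (n-1))`, `(a 0, b (n-1))`). -/
def Dr (n : ℕ) : SimpleGraph (Bool ⊕ Bool × Fin n) :=
  SimpleGraph.fromRel (fun u v =>
    match u, v with
    | Sum.inl c, Sum.inr (d, _) => c = d
    | Sum.inr (false, i), Sum.inr (true, j) =>
        (i : ℕ) = (j : ℕ) ∨ (i : ℕ) = (j : ℕ) + 1 ∨ ((i : ℕ) = 0 ∧ (j : ℕ) = n - 1)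
    | Sum.inr (false, i), Sum.inr (false, j) =>
        (i : ℕ) + 1 = (j : ℕ) ∨ ((i : ℕ) = 0 ∧ (j : ℕ) = n - 1)
    | Sum.inr (true, i), Sum.inr (true, j) =>
        (i : ℕ) + 1 = (j : ℕ) ∨ ((i : ℕ) = 0 ∧ (j : ℕ) = n - 1)
    | _, _ => False)

/-- `G` has a `P`-minor: branch sets witnessing `P` as a minor of `G`. -/
def HasMinor {V W : Type} (G : SimpleGraph V) (P : SimpleGraph W) : Prop :=
  ∃ S : W → Set V, (∀ w, (S w).Nonempty) ∧ (∀ w, (G.induce (S w)).Connected) ∧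
    (Pairwise fun w w' => Disjoint (S w) (S w')) ∧
    ∀ w w', P.Adj w w' → ∃ u ∈ S w, ∃ v ∈ S w', G.Adj u v

/-!
Indices are taken mod `n`. Take `x₁, x₂` to be the hubs `v₁, v₂` and `y, z` the rung `a₀ b₀`, and
let `x₁ - a - b - x₂` be a path. Since `D_n` is induced, if `a` and `b` both lie in `D_n` then
`a = aᵢ`, `b = bⱼ` with `i = j` or `i = j + 1`, and the next rung `aᵢ₊₁ bᵢ₊₁`, respectively the
previous rung `aⱼ bⱼ₋₁`, supplies `c, d`. Otherwise the part of the path outside `D_n` is a chord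
that produces a `K₅` minor:
* if `a, b` both lie outside, the branch sets are `{v₁, a, b}`, `{v₂}`, the rungs `0` and `1`,
  and the arc `a₂ … aₙ₋₁` together with `bₙ₋₁`, which closes the ladder around;
* if only `b` lies outside (so `a = aᵢ`), they are `{v₂, b}`, `{aᵢ}`, `{bᵢ}`, `{bᵢ₋₁}` and
  `{aᵢ₋₁, v₁, aᵢ₊₁, bᵢ₊₁}`;
* if only `a` lies outside, this is the previous case after the automorphism of `D_n` that
  exchanges the two hubs and maps `aᵢ ↦ b₋ᵢ`, `bᵢ ↦ a₋ᵢ`.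
-/

open SimpleGraph

theorem Fin.eq_add_one_iff_val {n : ℕ} [NeZero n] {i j : Fin n} :
    j = i + 1 ↔ (j : ℕ) = i + 1 ∨ ((j : ℕ) = 0 ∧ (i : ℕ) = n - 1) := by
  rcases Nat.lt_or_ge 1 n with hn | hn
  · rw [Fin.ext_iff, Fin.val_add_eq_ite, Fin.val_one', Nat.mod_eq_of_lt hn]
    split_ifs <;> omega
  · obtain rfl : n = 1 := by have := NeZero.ne n; omega
    simp [Subsingleton.elim j (i + 1), Fin.val_eq_zero]

theorem Fin.val_one_add_one {n : ℕ} [NeZero n] (hn : 3 ≤ n) : ((1 + 1 : Fin n) : ℕ) = 2 := by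
  rw [Fin.val_add_eq_ite, Fin.val_one', Nat.mod_eq_of_lt (by omega : 1 < n), if_neg (by omega)]

open Fin.NatCast in
theorem Fin.image_natCast_Icc {n : ℕ} [NeZero n] (m : ℕ) :
    (Nat.cast : ℕ → Fin n) '' Set.Icc m (n - 1) = {k : Fin n | m ≤ (k : ℕ)} := by
  ext k
  constructor
  · rintro ⟨j, ⟨hmj, hjn⟩, rfl⟩
    simp [Nat.mod_eq_of_lt (show j < n by have := NeZero.ne n; omega), hmj]
  · intro hk
    exact ⟨k, ⟨hk, by have := k.isLt; omega⟩, Fin.cast_val_eq_self k⟩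

namespace SimpleGraph

variable {V : Type*} {G : SimpleGraph V}

lemma connected_induce_singleton (v : V) : (G.induce {v}).Connected := by
  rw [induce_singleton_eq_top]
  exact connected_top

lemma connected_induce_insert {s : Set V} {u v : V} (hs : (G.induce s).Connected) (hv : v ∈ s)
    (huv : G.Adj u v) : (G.induce (insert u s)).Connected := by
  rw [Set.insert_eq]
  exact connected_induce_union (connected_induce_singleton u).preconnected hs.preconnected rfl hv
    huv

lemma connected_induce_image_Icc {f : ℕ → V} (hf : ∀ k, G.Adj (f k) (f (k + 1))) {m M : ℕ}
    (hmM : m ≤ M) : (G.induce (f '' Set.Icc m M)).Connected := by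
  induction M, hmM using Nat.le_induction with
  | base => rw [Set.Icc_self, Set.image_singleton]; exact connected_induce_singleton (f m)
  | succ M hmM ih =>
    rw [← Order.succ_eq_add_one, ← Set.insert_Icc_right_eq_Icc_succ (hmM.trans (Order.le_succ M)),
      Set.image_insert_eq]
    exact connected_induce_insert ih ⟨M, ⟨hmM, le_rfl⟩, rfl⟩ (hf M).symm

end SimpleGraph

theorem hasMinor_top_of_lt {V W : Type} [LinearOrder W] {G : SimpleGraph V} (S : W → Set V)
    (hconn : ∀ w, (G.induce (S w)).Connected) (hdisj : ∀ w w', w < w' → Disjoint (S w) (S w'))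
    (hadj : ∀ w w', w < w' → ∃ u ∈ S w, ∃ v ∈ S w', G.Adj u v) :
    HasMinor G (⊤ : SimpleGraph W) := by
  refine ⟨S, fun w => Set.nonempty_coe_sort.1 (hconn w).nonempty, hconn,
    (pairwise_disjoint_on S).2 hdisj, fun w w' hww' => ?_⟩
  rcases ((top_adj w w').1 hww').lt_or_gt with h | h
  · exact hadj w w' h
  · obtain ⟨u, hu, v, hv, huv⟩ := hadj w' w h
    exact ⟨v, hv, u, hu, huv.symm⟩

namespace Dr

variable {n : ℕ}

abbrev v₁ : Bool ⊕ Bool × Fin n := .inl false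
abbrev v₂ : Bool ⊕ Bool × Fin n := .inl true
abbrev a (i : Fin n) : Bool ⊕ Bool × Fin n := .inr (false, i)
abbrev b (i : Fin n) : Bool ⊕ Bool × Fin n := .inr (true, i)

@[simp] lemma adj_v₁_a (i : Fin n) : (Dr n).Adj v₁ (a i) := by simp [Dr]
@[simp] lemma adj_a_v₁ (i : Fin n) : (Dr n).Adj (a i) v₁ := (adj_v₁_a i).symm
@[simp] lemma adj_b_v₂ (i : Fin n) : (Dr n).Adj (b i) v₂ := by simp [Dr]
@[simp] lemma adj_v₂_b (i : Fin n) : (Dr n).Adj v₂ (b i) := (adj_b_v₂ i).symm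

lemma exists_eq_a_of_adj_v₁ {u : Bool ⊕ Bool × Fin n} (h : (Dr n).Adj v₁ u) : ∃ i, u = a i := by
  rcases u with c | ⟨(_ | _), i⟩ <;> simp_all [Dr]

lemma exists_eq_b_of_adj_v₂ {u : Bool ⊕ Bool × Fin n} (h : (Dr n).Adj u v₂) : ∃ j, u = b j := by
  rcases u with c | ⟨(_ | _), i⟩ <;> simp_all [Dr]

def reflect : Bool ⊕ Bool × Fin n → Bool ⊕ Bool × Fin n
  | .inl c => .inl !c
  | .inr (c, i) => .inr (!c, -i)

lemma reflect_involutive : Function.Involutive (reflect (n := n)) := by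
  rintro (c | ⟨c, i⟩) <;> simp [reflect]

variable [NeZero n]

@[simp] lemma adj_a_b_iff {i j : Fin n} : (Dr n).Adj (a i) (b j) ↔ i = j ∨ i = j + 1 := by
  rw [Fin.eq_add_one_iff_val, ← Fin.val_inj]
  simp [Dr]

@[simp] lemma adj_b_a_iff {i j : Fin n} : (Dr n).Adj (b j) (a i) ↔ i = j ∨ i = j + 1 := by
  rw [adj_comm, adj_a_b_iff]

@[simp] lemma adj_a_a_iff {i j : Fin n} :
    (Dr n).Adj (a i) (a j) ↔ i ≠ j ∧ (j = i + 1 ∨ i = j + 1) := by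
  rw [Fin.eq_add_one_iff_val, Fin.eq_add_one_iff_val, ne_eq, ← Fin.val_inj]
  simp [Dr]
  omega

@[simp] lemma adj_b_b_iff {i j : Fin n} :
    (Dr n).Adj (b i) (b j) ↔ i ≠ j ∧ (j = i + 1 ∨ i = j + 1) := by
  rw [Fin.eq_add_one_iff_val, Fin.eq_add_one_iff_val, ne_eq, ← Fin.val_inj]
  simp [Dr]
  omega

lemma adj_reflect {u v : Bool ⊕ Bool × Fin n} (h : (Dr n).Adj u v) :
    (Dr n).Adj (reflect u) (reflect v) := by
  rcases u with (_ | _) | ⟨(_ | _), i⟩ <;> rcases v with (_ | _) | ⟨(_ | _), j⟩ <;>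
    simp only [reflect, Bool.not_false, Bool.not_true] at h ⊢ <;>
    first
    | simp only [adj_a_a_iff, adj_b_b_iff, adj_a_b_iff, adj_b_a_iff] at h ⊢; grind
    | simp [Dr] at h ⊢

def reflectIso : Dr n ≃g Dr n where
  toEquiv := reflect_involutive.toPerm
  map_rel_iff' := ⟨fun h => by simpa [reflect_involutive _] using adj_reflect h, adj_reflect⟩

theorem exists_rung (hn : 2 ≤ n) {i j : Fin n} (h : (Dr n).Adj (a i) (b j)) :
    ∃ c d, (Dr n).Adj v₁ c ∧ (Dr n).Adj (a i) c ∧ (Dr n).Adj (b j) c ∧ (Dr n).Adj (b j) d ∧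
      (Dr n).Adj c d ∧ (Dr n).Adj d v₂ := by
  have hn₁ : n ≠ 1 := by omega
  rcases adj_a_b_iff.1 h with rfl | rfl
  · exact ⟨a (i + 1), b (i + 1), by simp [hn₁]⟩
  · exact ⟨a j, b (j - 1), by simp [hn₁, eq_sub_iff_add_eq]⟩

variable {W : Type} {H : SimpleGraph W}

theorem hasMinor_of_path_a_v₂ (hn : 3 ≤ n) (e : Dr n ↪g H) {i : Fin n} {w : W}
    (hw : w ∉ Set.range e) (h₁ : H.Adj (e (a i)) w) (h₂ : H.Adj w (e v₂)) :
    HasMinor H (⊤ : SimpleGraph (Fin 5)) := by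
  have hn₁ : n ≠ 1 := by omega
  have hi : i - 1 ≠ i + 1 := by
    rw [sub_eq_add_neg, Ne, add_right_inj, neg_eq_iff_add_eq_zero]
    simp [Fin.ext_iff, Fin.val_one_add_one hn]
  simp only [Set.mem_range, not_exists] at hw
  refine hasMinor_top_of_lt ![{e v₂, w}, {e (a i)}, {e (b i)}, {e (b (i - 1))},
    {e (a (i - 1)), e v₁, e (a (i + 1)), e (b (i + 1))}] (fun k => ?_) (fun k l hkl => ?_)
    (fun k l hkl => ?_)
  · fin_cases k
    · exact induce_pair_connected_of_adj h₂.symm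
    iterate 3 exact connected_induce_singleton _
    refine connected_induce_insert (v := e v₁) ?_ (by simp) (by simp)
    refine connected_induce_insert (v := e (a (i + 1))) ?_ (by simp) (by simp)
    exact induce_pair_connected_of_adj (by simp)
  · fin_cases k <;> fin_cases l <;> simp [hw, hn₁, hi, eq_sub_iff_add_eq] at hkl ⊢
  · fin_cases k <;> fin_cases l <;> simp [h₁.symm, hn₁, eq_sub_iff_add_eq] at hkl ⊢

theorem hasMinor_of_path_v₁_b (hn : 3 ≤ n) (e : Dr n ↪g H) {j : Fin n} {w : W}
    (hw : w ∉ Set.range e) (h₁ : H.Adj (e v₁) w) (h₂ : H.Adj w (e (b j))) :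
    HasMinor H (⊤ : SimpleGraph (Fin 5)) := by
  have hrange : Set.range (reflectIso.toEmbedding.trans e) ⊆ Set.range e := by
    rintro _ ⟨u, rfl⟩
    exact ⟨_, rfl⟩
  refine hasMinor_of_path_a_v₂ hn (reflectIso.toEmbedding.trans e) (i := -j)
    (fun h => hw (hrange h)) ?_ ?_
  · simpa [reflectIso, reflect] using h₂.symm
  · simpa [reflectIso, reflect] using h₁.symm

open Fin.NatCast in
theorem hasMinor_of_path_v₁_v₂ (hn : 3 ≤ n) (e : Dr n ↪g H) {w₁ w₂ : W}
    (hw₁ : w₁ ∉ Set.range e) (hw₂ : w₂ ∉ Set.range e) (h₁ : H.Adj (e v₁) w₁) (h : H.Adj w₁ w₂)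
    (h₂ : H.Adj w₂ (e v₂)) : HasMinor H (⊤ : SimpleGraph (Fin 5)) := by
  have hn₁ : n ≠ 1 := by omega
  have h1mod : 1 % n = 1 := Nat.one_mod_eq_one.2 hn₁
  have hneg : (-1 : Fin n) ≠ 1 := by
    rw [Ne, neg_eq_iff_add_eq_zero]
    simp [Fin.ext_iff, Fin.val_one_add_one hn]
  have hmem : 2 ≤ ((-1 : Fin n) : ℕ) := by
    rw [Fin.val_neg, if_neg (by simp [hn₁]), Fin.val_one', h1mod]
    omega
  simp only [Set.mem_range, not_exists] at hw₁ hw₂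
  have hchain : (H.induce (e '' (a '' {k | 2 ≤ (k : ℕ)}))).Connected := by
    rw [← Fin.image_natCast_Icc, Set.image_image, Set.image_image]
    exact connected_induce_image_Icc (fun k => by simp [Nat.cast_succ, hn₁]) (by omega)
  refine hasMinor_top_of_lt ![{e v₁, w₁, w₂}, {e v₂}, {e (a 0), e (b 0)}, {e (a 1), e (b 1)},
    insert (e (b (-1))) (e '' (a '' {k | 2 ≤ (k : ℕ)}))] (fun k => ?_) (fun k l hkl => ?_)
    (fun k l hkl => ?_)
  · fin_cases k
    · exact connected_induce_insert (induce_pair_connected_of_adj h) (by simp) h₁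
    · exact connected_induce_singleton _
    · exact induce_pair_connected_of_adj (by simp)
    · exact induce_pair_connected_of_adj (by simp)
    · exact connected_induce_insert hchain ⟨a (-1), ⟨-1, hmem, rfl⟩, rfl⟩ (by simp)
  · fin_cases k <;> fin_cases l <;> simp [hw₁, hw₂, hn₁, hneg, h1mod] at hkl ⊢
  · fin_cases k <;> fin_cases l <;>
      simp [h₂, hn₁, Fin.val_one_add_one hn, and_or_left, exists_or,
        show ∃ k : Fin n, 2 ≤ (k : ℕ) from ⟨-1, hmem⟩] at hkl ⊢

end Dr

/-- If `H` is `K₅`-minor-free and contains `D n` (for some `n ≥ 3`) as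
an induced subgraph, then `H` satisfies the sentence `φ`: there are `x₁, x₂, y, z` with
`E(x₁,y), E(y,z), E(z,x₂)` such that for all `a, b` with `E(x₁,a), E(a,b), E(b,x₂)` there
are `c, d` with `E(x₁,c), E(a,c), E(b,c), E(b,d), E(c,d), E(d,x₂)`. -/
theorem Dr_induced_implies_phi {W : Type} (H : SimpleGraph W)
    (hK5 : ¬ HasMinor H (⊤ : SimpleGraph (Fin 5)))
    (n : ℕ) (hn : 3 ≤ n) (e : Dr n ↪g H) :
    ∃ x₁ x₂ y z, H.Adj x₁ y ∧ H.Adj y z ∧ H.Adj z x₂ ∧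
      ∀ a b, H.Adj x₁ a → H.Adj a b → H.Adj b x₂ →
        ∃ c d, H.Adj x₁ c ∧ H.Adj a c ∧ H.Adj b c ∧ H.Adj b d ∧ H.Adj c d ∧ H.Adj d x₂ := by
  have : NeZero n := ⟨by omega⟩
  refine ⟨e Dr.v₁, e Dr.v₂, e (Dr.a 0), e (Dr.b 0), by simp, by simp, by simp,
    fun x y hx hxy hy => ?_⟩
  by_cases hxe : x ∈ Set.range e <;> by_cases hye : y ∈ Set.range e
  · obtain ⟨_, rfl⟩ := hxe
    obtain ⟨_, rfl⟩ := hye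
    obtain ⟨i, rfl⟩ := Dr.exists_eq_a_of_adj_v₁ (e.map_adj_iff.1 hx)
    obtain ⟨j, rfl⟩ := Dr.exists_eq_b_of_adj_v₂ (e.map_adj_iff.1 hy)
    obtain ⟨c, d, hcd⟩ := Dr.exists_rung (by omega) (e.map_adj_iff.1 hxy)
    exact ⟨e c, e d, by simpa using hcd⟩
  · obtain ⟨_, rfl⟩ := hxe
    obtain ⟨i, rfl⟩ := Dr.exists_eq_a_of_adj_v₁ (e.map_adj_iff.1 hx)
    exact (hK5 (Dr.hasMinor_of_path_a_v₂ hn e hye hxy hy)).elim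
  · obtain ⟨_, rfl⟩ := hye
    obtain ⟨j, rfl⟩ := Dr.exists_eq_b_of_adj_v₂ (e.map_adj_iff.1 hy)
    exact (hK5 (Dr.hasMinor_of_path_v₁_b hn e hxe hx hxy)).elim
  · exact (hK5 (Dr.hasMinor_of_path_v₁_v₂ hn e hxe hye hx hxy hy)).elim
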